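/- Fix an integer m ≥ 1 and a real p with 1 ≤ p < ∞. Let α_{nk} (n, k ≥ 1) be a doubly indexed family of reals (α_{nk} = log a_{nk} for an infinite matrix A of geometric real numbers), and define b_{ik} = (1/i) · (Δ^{m-1}α_{1k} − Δ^{m-1}α_{(i+1)k}), where Δ^{m-1}α_{nk} = ∑_{v=0}^{m-1} (−1)^v · binom(m-1,v) · α_{(n+v)k}. Then the following are equivalent: (I) for every convergent real sequence t, the series A_n(t) = ∑_{k=1}^∞ α_{nk} t_k converges for each n and ∑_{i=1}^∞ |(1/i) ∑_{n=1}^i Δ^m A_n(t)|^p < ∞; (II) (i) ∑_{k=1}^∞ |α_{nk}| < ∞ for each n, and (ii) for every convergent real sequence t, the series B_i(t) = ∑_{k=1}^∞ b_{ik} t_k converges for each i and ∑_{i=1}^∞ |B_i(t)|^p < ∞. (In the paper's notation: A ∈ (c^G, C_p^G(Δ_G^m)) if and only if the rows of A are in ℓ_1^G and B ∈ (c^G, ℓ_p^G).) -/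

import Mathlib

/-!
Writing `A_n = ∑_k α_{nk} t_k`, the identity `Δ^m = Δ^{m-1} - Δ^{m-1} ∘ shift` makes the Cesàro
mean `(1/i) ∑_{n ≤ i} Δ^m A_n` telescope to `(1/i) (Δ^{m-1} A_1 - Δ^{m-1} A_{i+1})`, which is the
`i`-th row of `B` applied to `t` as soon as the rows of `A` converge on `t`. The two conditions
therefore differ only in how row convergence is expressed: taking `t = 1` gives (absolute)
summability of each row, and conversely a convergent `t` is bounded.
-/

/-- Classical `m`-th order forward difference
`Δ^m y_k = ∑_{v=0}^m (−1)^v C(m,v) y_{k+v}`. -/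
noncomputable def fdiff (m : ℕ) (y : ℕ → ℝ) (k : ℕ) : ℝ :=
  ∑ v ∈ Finset.range (m + 1), (-1 : ℝ) ^ v * (m.choose v : ℝ) * y (k + v)

/-- The associated matrix
`b_{ik} = (1/i)·(Δ^{m-1}α_{1k} − Δ^{m-1}α_{(i+1)k})`, where `Δ^{m-1}` acts on
the row index. -/
noncomputable def bmat (m : ℕ) (α : ℕ → ℕ → ℝ) (i k : ℕ) : ℝ :=
  (1 / (i : ℝ)) *
    (fdiff (m - 1) (fun n => α n k) 1 - fdiff (m - 1) (fun n => α n k) (i + 1))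

open Finset Filter Topology

lemma fdiff_eq_neg_one_pow_mul_fwdDiff_iter (m : ℕ) (y : ℕ → ℝ) (k : ℕ) :
    fdiff m y k = (-1) ^ m * (fwdDiff 1)^[m] y k := by
  rw [fwdDiff_iter_eq_sum_shift, mul_sum]
  refine sum_congr rfl fun v hv => ?_
  have hvm : v ≤ m := Nat.lt_succ_iff.mp (mem_range.mp hv)
  have hsign : (-1 : ℝ) ^ m * (-1) ^ (m - v) = (-1) ^ v := by
    rw [← pow_add, show m + (m - v) = v + 2 * (m - v) by omega, pow_add, pow_mul]
    simp
  rw [zsmul_eq_mul, smul_eq_mul, mul_one]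
  push_cast
  rw [← mul_assoc, ← mul_assoc, hsign]

lemma fdiff_succ (m : ℕ) (y : ℕ → ℝ) (k : ℕ) :
    fdiff (m + 1) y k = fdiff m y k - fdiff m y (k + 1) := by
  simp only [fdiff_eq_neg_one_pow_mul_fwdDiff_iter, Function.iterate_succ_apply', fwdDiff]
  ring

lemma sum_Icc_fdiff_succ (m : ℕ) (y : ℕ → ℝ) (i : ℕ) :
    ∑ n ∈ Icc 1 i, fdiff (m + 1) y n = fdiff m y 1 - fdiff m y (i + 1) := by
  rw [← Ico_add_one_right_eq_Icc, ← neg_sub, ← sum_Ico_sub (fdiff m y) (by omega : 1 ≤ i + 1),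
    ← sum_neg_distrib]
  exact sum_congr rfl fun n _ => by rw [fdiff_succ, neg_sub]

lemma hasSum_fdiff {ι : Type*} (m : ℕ) {f : ℕ → ι → ℝ} {a : ℕ → ℝ} (n : ℕ)
    (h : ∀ v ≤ m, HasSum (f (n + v)) (a (n + v))) :
    HasSum (fun k => fdiff m (fun j => f j k) n) (fdiff m a n) :=
  hasSum_sum fun v hv => (h v (Nat.lt_succ_iff.mp (mem_range.mp hv))).mul_left _

lemma bmat_succ_mul (m : ℕ) (α : ℕ → ℕ → ℝ) (i k : ℕ) (c : ℝ) :
    bmat (m + 1) α i k * c =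
      1 / (i : ℝ) * (fdiff m (fun n => α n k * c) 1 - fdiff m (fun n => α n k * c) (i + 1)) := by
  simp only [bmat, fdiff, Nat.add_sub_cancel, sub_mul, sum_mul, mul_assoc]

lemma hasSum_bmat_succ_mul (m : ℕ) (α : ℕ → ℕ → ℝ) (t : ℕ → ℝ) {A : ℕ → ℝ}
    (hA : ∀ n, 1 ≤ n → HasSum (fun k => α n (k + 1) * t (k + 1)) (A n)) (i : ℕ) :
    HasSum (fun k => bmat (m + 1) α i (k + 1) * t (k + 1))
      (1 / (i : ℝ) * ∑ n ∈ Icc 1 i, fdiff (m + 1) A n) := by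
  simp only [sum_Icc_fdiff_succ, bmat_succ_mul]
  exact ((hasSum_fdiff m 1 fun v _ => hA _ (by omega)).sub
    (hasSum_fdiff m (i + 1) fun v _ => hA _ (by omega))).mul_left _

lemma summable_mul_of_summable_abs_of_tendsto {a t : ℕ → ℝ} (ha : Summable fun k => |a k|)
    {L : ℝ} (ht : Tendsto t atTop (𝓝 L)) : Summable fun k => a k * t k := by
  obtain ⟨C, hC⟩ := ht.abs.bddAbove_range
  refine .of_norm_bounded (ha.mul_right C) fun k => ?_
  rw [Real.norm_eq_abs, abs_mul]
  exact mul_le_mul_of_nonneg_left (hC (Set.mem_range_self k)) (abs_nonneg _)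

theorem matrix_c_to_CpG_general (m : ℕ) (hm : 1 ≤ m) (p : ℝ)
    (α : ℕ → ℕ → ℝ) :
    (∀ t : ℕ → ℝ, (∃ L : ℝ, Filter.Tendsto t Filter.atTop (nhds L)) →
        (∀ n, 1 ≤ n → Summable (fun k : ℕ => α n (k + 1) * t (k + 1))) ∧
        Summable (fun i : ℕ =>
          |(1 / (i : ℝ)) * ∑ n ∈ Finset.Icc 1 i,
              fdiff m (fun j => ∑' k : ℕ, α j (k + 1) * t (k + 1)) n| ^ p)) ↔
      ((∀ n, 1 ≤ n → Summable (fun k : ℕ => |α n (k + 1)|)) ∧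
        ∀ t : ℕ → ℝ, (∃ L : ℝ, Filter.Tendsto t Filter.atTop (nhds L)) →
          (∀ i, 1 ≤ i → Summable (fun k : ℕ => bmat m α i (k + 1) * t (k + 1))) ∧
          Summable (fun i : ℕ =>
            |∑' k : ℕ, bmat m α (i + 1) (k + 1) * t (k + 1)| ^ p)) := by
  obtain ⟨m, rfl⟩ : ∃ m', m = m' + 1 := ⟨m - 1, by omega⟩
  have hB (t : ℕ → ℝ) (hrow : ∀ n, 1 ≤ n → Summable fun k => α n (k + 1) * t (k + 1)) :=
    hasSum_bmat_succ_mul m α t fun n hn => (hrow n hn).hasSum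
  constructor
  · intro H
    refine ⟨fun n hn => summable_abs_iff.mpr ?_, fun t ht => ?_⟩
    · simpa using (H 1 ⟨1, tendsto_const_nhds⟩).1 n hn
    obtain ⟨hrow, hsum⟩ := H t ht
    refine ⟨fun i _ => (hB t hrow i).summable, ?_⟩
    simpa only [(hB t hrow _).tsum_eq] using (summable_nat_add_iff 1).mpr hsum
  · rintro ⟨habs, H⟩ t ⟨L, hL⟩
    have hrow (n : ℕ) (hn : 1 ≤ n) : Summable fun k => α n (k + 1) * t (k + 1) :=
      summable_mul_of_summable_abs_of_tendsto (habs n hn) (hL.comp (tendsto_add_atTop_nat 1))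
    refine ⟨hrow, (summable_nat_add_iff 1).mp ?_⟩
    simpa only [(hB t hrow _).tsum_eq] using (H t ⟨L, hL⟩).2

/-- `A ∈ (c^G, C_p^G(Δ_G^m))` iff the rows of `A` are in
`ℓ_1^G` and `B ∈ (c^G, ℓ_p^G)`, stated after taking logarithms
(`α_{nk} = log a_{nk}`, `t_k = log x_k`; `c^G` corresponds to convergent
real sequences). -/
theorem matrix_c_to_CpG (m : ℕ) (hm : 1 ≤ m) (p : ℝ) (hp : 1 ≤ p)
    (α : ℕ → ℕ → ℝ) :
    (∀ t : ℕ → ℝ, (∃ L : ℝ, Filter.Tendsto t Filter.atTop (nhds L)) →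
        (∀ n, 1 ≤ n → Summable (fun k : ℕ => α n (k + 1) * t (k + 1))) ∧
        Summable (fun i : ℕ =>
          |(1 / (i : ℝ)) * ∑ n ∈ Finset.Icc 1 i,
              fdiff m (fun j => ∑' k : ℕ, α j (k + 1) * t (k + 1)) n| ^ p)) ↔
      ((∀ n, 1 ≤ n → Summable (fun k : ℕ => |α n (k + 1)|)) ∧
        ∀ t : ℕ → ℝ, (∃ L : ℝ, Filter.Tendsto t Filter.atTop (nhds L)) →
          (∀ i, 1 ≤ i → Summable (fun k : ℕ => bmat m α i (k + 1) * t (k + 1))) ∧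
          Summable (fun i : ℕ =>
            |∑' k : ℕ, bmat m α (i + 1) (k + 1) * t (k + 1)| ^ p)) :=
  matrix_c_to_CpG_general m hm p α
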